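/- Let E be an edge constraint, Γ a set of configurations such that every member of Γ satisfies the universal quantifier w.r.t. E and every singleton configuration satisfying the universal quantifier w.r.t. E is dominated by some member of Γ, and S a set of configurations, each satisfying the universal quantifier w.r.t. E, such that every member of Γ is dominated by some member of S. Call a configuration missing if it satisfies the universal quantifier w.r.t. E and is not dominated by any member of S. If there exists a missing configuration all of whose sets are nonempty, then there exist configurations A, B ∈ S such that some combination of A and B is missing. (Some missing configuration can be obtained by combining two already computed configurations.) -/

import Mathlib

namespace RoundElim

/-- The configuration (multiset of cardinality `δ`) associated to a function `Fin δ → α`. -/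
def ofFn {α : Type*} {δ : ℕ} (f : Fin δ → α) : Multiset α :=
  (List.ofFn f : List α)

variable {σ : Type*} [DecidableEq σ]

/-- `DominatedBy A B` means: configuration `B` dominates configuration `A`. -/
def DominatedBy (A B : Multiset (Finset σ)) : Prop :=
  Multiset.Rel (· ⊆ ·) A B

/-- `StrictlyDominatedBy A B` means: configuration `B` strictly dominates configuration `A`. -/
def StrictlyDominatedBy (A B : Multiset (Finset σ)) : Prop :=
  DominatedBy A B ∧ ¬ DominatedBy B A

/-- The combination of the representatives `a`, `b` with respect to the permutation `φ`
and the index `u`: union at position `u`, intersection everywhere else. -/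
def combineFn {δ : ℕ} (a b : Fin δ → Finset σ) (φ : Equiv.Perm (Fin δ)) (u : Fin δ) :
    Fin δ → Finset σ :=
  fun i => if i = u then a i ∪ b (φ i) else a i ∩ b (φ i)

/-- `C` is a combination of the configurations `A` and `B`. -/
def IsCombination (δ : ℕ) (C A B : Multiset (Finset σ)) : Prop :=
  ∃ (a b : Fin δ → Finset σ) (φ : Equiv.Perm (Fin δ)) (u : Fin δ),
    ofFn a = A ∧ ofFn b = B ∧ ofFn (combineFn a b φ u) = C

/-- `C` satisfies the universal quantifier w.r.t. the edge constraint `E`. -/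
def SatUQ (E : Set (Multiset σ)) (C : Multiset (Finset σ)) : Prop :=
  ∀ M : Multiset σ, Multiset.Rel (· ∈ ·) M C → M ∈ E

/-- A singleton configuration: all its sets have exactly one element. -/
def IsSingletonConfig (C : Multiset (Finset σ)) : Prop :=
  ∀ s ∈ C, s.card = 1

/-- The combination-closure of a set `Γ` of configurations: the smallest set containing `Γ`
and containing every combination of two of its members. -/
inductive CombClosure (δ : ℕ) (Γ : Set (Multiset (Finset σ))) :
    Multiset (Finset σ) → Prop
  | base {C : Multiset (Finset σ)} : C ∈ Γ → CombClosure δ Γ C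
  | comb {A B C : Multiset (Finset σ)} : CombClosure δ Γ A → CombClosure δ Γ B →
      IsCombination δ C A B → CombClosure δ Γ C

/-
Suppose no combination of two members of `S` is missing, and call `t : Fin δ → Finset σ`
covered if `ofFn t` is dominated by a member of `S`. Covered functions are closed under
combination: dominate both by members of `S`; the combination of those satisfies the universal
quantifier, so it is not missing, and it dominates the combination of the two. Every singleton
configuration below the missing configuration `m` satisfies the universal quantifier, so it is
dominated by a member of `Γ`, hence of `S`. By induction on `∑ i, (t i).card`, a function with
nonempty sets whose singleton choices are all covered is covered: split a set of size at least
two as `B ∪ {y}` and recover the function as the combination of the two smaller ones. Applied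
to `m`, this contradicts `m` being missing.
-/

theorem _root_.Multiset.Rel.comp {α β γ : Type*} {r : α → β → Prop} {p : β → γ → Prop}
    {s : Multiset α} {t : Multiset β} {u : Multiset γ} (hst : Multiset.Rel r s t)
    (htu : Multiset.Rel p t u) : Multiset.Rel (Relation.Comp r p) s u := by
  induction hst generalizing u with
  | zero => rw [Multiset.rel_zero_left.mp htu]; exact Multiset.Rel.zero
  | cons hab _ ih =>
    obtain ⟨c, u', hbc, htu', rfl⟩ := Multiset.rel_cons_left.mp htu
    exact Multiset.Rel.cons ⟨_, hab, hbc⟩ (ih htu')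

section OfFn

variable {α β : Type*} {δ : ℕ}

lemma ofFn_eq_map (f : Fin δ → α) : ofFn f = Finset.univ.val.map f :=
  (Fin.univ_val_map f).symm

lemma card_ofFn (f : Fin δ → α) : Multiset.card (ofFn f) = δ := by
  simp [ofFn]

lemma mem_ofFn {f : Fin δ → α} {a : α} : a ∈ ofFn f ↔ ∃ i, f i = a := by
  simp [ofFn]

lemma exists_ofFn_eq {M : Multiset α} (h : Multiset.card M = δ) :
    ∃ f : Fin δ → α, ofFn f = M := by
  have hlen : M.toList.length = δ := by simpa using h
  subst hlen
  exact ⟨M.toList.get, by rw [ofFn, List.ofFn_get, Multiset.coe_toList]⟩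

lemma ofFn_comp_perm (f : Fin δ → α) (π : Equiv.Perm (Fin δ)) : ofFn (f ∘ π) = ofFn f := by
  rw [ofFn_eq_map, ofFn_eq_map, ← Multiset.map_map, Multiset.map_univ_val_equiv]

lemma rel_ofFn_of_forall {r : α → β → Prop} {f : Fin δ → α} {g : Fin δ → β}
    (h : ∀ i, r (f i) (g i)) : Multiset.Rel r (ofFn f) (ofFn g) := by
  rw [ofFn_eq_map, ofFn_eq_map, Multiset.rel_map]
  exact Multiset.rel_refl_of_refl_on fun i _ => h i

lemma exists_ofFn_of_rel_ofFn {r : α → β → Prop} {f : Fin δ → α} {M : Multiset β}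
    (h : Multiset.Rel r (ofFn f) M) : ∃ g : Fin δ → β, ofFn g = M ∧ ∀ i, r (f i) (g i) := by
  induction δ generalizing M with
  | zero => exact ⟨Fin.elim0, by simpa [ofFn, eq_comm] using h, fun i => i.elim0⟩
  | succ n ih =>
    rw [ofFn, List.ofFn_succ, ← Multiset.cons_coe, Multiset.rel_cons_left] at h
    obtain ⟨b, M', hb, hM', rfl⟩ := h
    obtain ⟨g, rfl, hg⟩ := ih (f := fun i => f i.succ) hM'
    exact ⟨Fin.cons b g, by simp [ofFn, List.ofFn_succ], Fin.cases hb hg⟩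

end OfFn

variable {δ : ℕ} {E : Set (Multiset σ)}

omit [DecidableEq σ] in
lemma DominatedBy.trans {A B C : Multiset (Finset σ)} (hAB : DominatedBy A B)
    (hBC : DominatedBy B C) : DominatedBy A C :=
  Multiset.Rel.trans _ hAB hBC

omit [DecidableEq σ] in
lemma dominatedBy_ofFn {s t : Fin δ → Finset σ} (h : ∀ i, s i ⊆ t i) :
    DominatedBy (ofFn s) (ofFn t) :=
  rel_ofFn_of_forall h

omit [DecidableEq σ] in
lemma SatUQ.of_dominatedBy {A B : Multiset (Finset σ)} (hB : SatUQ E B)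
    (hAB : DominatedBy A B) : SatUQ E A :=
  fun N hN => hB N ((hN.comp hAB).mono fun _ _ _ _ ⟨_, hx, hsub⟩ => hsub hx)

omit [DecidableEq σ] in
lemma satUQ_ofFn_iff {c : Fin δ → Finset σ} :
    SatUQ E (ofFn c) ↔ ∀ x : Fin δ → σ, (∀ i, x i ∈ c i) → ofFn x ∈ E := by
  refine ⟨fun hc x hx => hc _ (rel_ofFn_of_forall hx), fun hc N hN => ?_⟩
  obtain ⟨x, rfl, hx⟩ := exists_ofFn_of_rel_ofFn (Multiset.rel_flip.mpr hN)
  exact hc x hx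

lemma combineFn_subset_combineFn {a a' b b' : Fin δ → Finset σ} (ha : ∀ i, a i ⊆ a' i)
    (hb : ∀ i, b i ⊆ b' i) (φ : Equiv.Perm (Fin δ)) (u i : Fin δ) :
    combineFn a b φ u i ⊆ combineFn a' b' φ u i := by
  unfold combineFn
  split_ifs
  exacts [Finset.union_subset_union (ha i) (hb _), Finset.inter_subset_inter (ha i) (hb _)]

lemma combineFn_update_update (t : Fin δ → Finset σ) (u : Fin δ) (B C : Finset σ) :
    combineFn (Function.update t u B) (Function.update t u C) 1 u =
      Function.update t u (B ∪ C) := by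
  funext i
  by_cases hi : i = u
  · subst hi; simp [combineFn]
  · simp [combineFn, hi]

/-- A choice from a combination either takes its `u`-th element from `a u`, and is then a
choice from `a`, or from `b (φ u)`, and is then a choice from `b` after reindexing by `φ`. -/
lemma satUQ_ofFn_combineFn {a b : Fin δ → Finset σ} (ha : SatUQ E (ofFn a))
    (hb : SatUQ E (ofFn b)) (φ : Equiv.Perm (Fin δ)) (u : Fin δ) :
    SatUQ E (ofFn (combineFn a b φ u)) := by
  rw [satUQ_ofFn_iff] at ha hb ⊢
  intro x hx
  have hoff : ∀ i ≠ u, x i ∈ a i ∧ x i ∈ b (φ i) := fun i hi => by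
    simpa [combineFn, hi] using hx i
  have hat : x u ∈ a u ∨ x u ∈ b (φ u) := by simpa [combineFn] using hx u
  rcases hat with hu | hu
  · exact ha x fun i => if hi : i = u then hi ▸ hu else (hoff i hi).1
  · have hxb : ∀ i, x i ∈ b (φ i) := fun i => if hi : i = u then hi ▸ hu else (hoff i hi).2
    rw [← ofFn_comp_perm x φ.symm]
    exact hb _ fun j => by simpa using hxb (φ.symm j)

lemma mem_of_forall_singleton_subset {D : Set (Fin δ → Finset σ)}
    (hD : ∀ t₁ ∈ D, ∀ t₂ ∈ D, ∀ u, combineFn t₁ t₂ 1 u ∈ D) {t : Fin δ → Finset σ}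
    (ht : ∀ i, (t i).Nonempty)
    (hsingle : ∀ s : Fin δ → Finset σ, (∀ i, (s i).card = 1) → (∀ i, s i ⊆ t i) → s ∈ D) :
    t ∈ D := by
  induction hn : ∑ i, (t i).card using Nat.strong_induction_on generalizing t with
  | _ n ih =>
  by_cases hcard : ∀ i, (t i).card = 1
  · exact hsingle t hcard fun _ => subset_rfl
  push Not at hcard
  obtain ⟨u, hu⟩ := hcard
  have htu : 1 < (t u).card := lt_of_le_of_ne (ht u).card_pos hu.symm
  have hpiece : ∀ C ⊆ t u, C.Nonempty → C.card < (t u).card → Function.update t u C ∈ D := by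
    intro C hCt hC hCcard
    have hsub : ∀ i, Function.update t u C i ⊆ t i := fun i => by
      by_cases hi : i = u
      · subst hi; simpa using hCt
      · simp [hi]
    refine ih _ ?_ (fun i => ?_) (fun s hs hst => hsingle s hs fun i => (hst i).trans (hsub i)) rfl
    · rw [← hn]
      exact Finset.sum_lt_sum (fun i _ => Finset.card_le_card (hsub i))
        ⟨u, Finset.mem_univ _, by simpa using hCcard⟩
    · by_cases hi : i = u
      · subst hi; simpa using hC
      · simpa [hi] using ht i
  obtain ⟨y, hy⟩ := ht u
  have hrest : ((t u).erase y).Nonempty := by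
    rw [← Finset.card_pos, Finset.card_erase_of_mem hy]; omega
  have hsplit := hD _ (hpiece _ (Finset.erase_subset y _) hrest (Finset.card_erase_lt_of_mem hy))
    _ (hpiece {y} (by simpa using hy) (Finset.singleton_nonempty y) (by simpa using htu)) u
  rwa [combineFn_update_update, Finset.erase_union_eq _ _ hy, Function.update_eq_self] at hsplit

lemma exists_dominatedBy_combineFn {S : Set (Multiset (Finset σ))}
    (hSuq : ∀ T ∈ S, SatUQ E T)
    (hS : ∀ A ∈ S, ∀ B ∈ S, ∀ C, IsCombination δ C A B → SatUQ E C → ∃ T ∈ S, DominatedBy C T)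
    {t₁ t₂ : Fin δ → Finset σ} (h₁ : ∃ T ∈ S, DominatedBy (ofFn t₁) T)
    (h₂ : ∃ T ∈ S, DominatedBy (ofFn t₂) T) (u : Fin δ) :
    ∃ T ∈ S, DominatedBy (ofFn (combineFn t₁ t₂ 1 u)) T := by
  obtain ⟨_, hT₁S, hT₁⟩ := h₁
  obtain ⟨τ₁, rfl, hτ₁⟩ := exists_ofFn_of_rel_ofFn hT₁
  obtain ⟨_, hT₂S, hT₂⟩ := h₂
  obtain ⟨τ₂, rfl, hτ₂⟩ := exists_ofFn_of_rel_ofFn hT₂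
  obtain ⟨T, hTS, hT⟩ := hS _ hT₁S _ hT₂S _ ⟨τ₁, τ₂, 1, u, rfl, rfl, rfl⟩
    (satUQ_ofFn_combineFn (hSuq _ hT₁S) (hSuq _ hT₂S) 1 u)
  exact ⟨T, hTS, (dominatedBy_ofFn (combineFn_subset_combineFn hτ₁ hτ₂ 1 u)).trans hT⟩

theorem missing_from_two_computed_general {σ : Type*} [DecidableEq σ] (δ : ℕ)
    (E : Set (Multiset σ)) (Γ S : Set (Multiset (Finset σ)))
    (hΓsing : ∀ M : Multiset (Finset σ), Multiset.card M = δ → IsSingletonConfig M →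
      SatUQ E M → ∃ A ∈ Γ, DominatedBy M A)
    (hSuq : ∀ T ∈ S, SatUQ E T)
    (hΓS : ∀ A ∈ Γ, ∃ T ∈ S, DominatedBy A T)
    (hex : ∃ M : Multiset (Finset σ), Multiset.card M = δ ∧ (∀ s ∈ M, s.Nonempty) ∧
      SatUQ E M ∧ ¬ ∃ T ∈ S, DominatedBy M T) :
    ∃ A ∈ S, ∃ B ∈ S, ∃ C : Multiset (Finset σ), IsCombination δ C A B ∧
      SatUQ E C ∧ ¬ ∃ T ∈ S, DominatedBy C T := by
  by_contra! hclosed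
  obtain ⟨M, hMcard, hMne, hMuq, hMmissing⟩ := hex
  obtain ⟨m, rfl⟩ := exists_ofFn_eq hMcard
  refine hMmissing (mem_of_forall_singleton_subset (D := {t | ∃ T ∈ S, DominatedBy (ofFn t) T})
    (fun _ h₁ _ h₂ u => exists_dominatedBy_combineFn hSuq hclosed h₁ h₂ u)
    (fun i => hMne _ (mem_ofFn.mpr ⟨i, rfl⟩)) fun s hs hsm => ?_)
  have hsingleton : IsSingletonConfig (ofFn s) := fun x hx => by
    obtain ⟨i, rfl⟩ := mem_ofFn.mp hx
    exact hs i
  obtain ⟨A, hAΓ, hsA⟩ :=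
    hΓsing _ (card_ofFn s) hsingleton (hMuq.of_dominatedBy (dominatedBy_ofFn hsm))
  obtain ⟨T, hTS, hAT⟩ := hΓS A hAΓ
  exact ⟨T, hTS, hsA.trans hAT⟩

/-- If at least one configuration (with nonempty sets) is missing, then some missing
configuration can be obtained by combining two already computed configurations.
(Missing = satisfies the universal quantifier w.r.t. `E` and is not dominated by any member
of the set `S` of computed configurations.) -/
theorem missing_from_two_computed {σ : Type*} [Fintype σ] [DecidableEq σ] (δ : ℕ) (hδ : 0 < δ)
    (E : Set (Multiset σ)) (Γ S : Set (Multiset (Finset σ)))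
    (hΓuq : ∀ A ∈ Γ, SatUQ E A)
    (hΓsing : ∀ M : Multiset (Finset σ), Multiset.card M = δ → IsSingletonConfig M →
      SatUQ E M → ∃ A ∈ Γ, DominatedBy M A)
    (hSuq : ∀ T ∈ S, SatUQ E T)
    (hΓS : ∀ A ∈ Γ, ∃ T ∈ S, DominatedBy A T)
    (hex : ∃ M : Multiset (Finset σ), Multiset.card M = δ ∧ (∀ s ∈ M, s.Nonempty) ∧
      SatUQ E M ∧ ¬ ∃ T ∈ S, DominatedBy M T) :
    ∃ A ∈ S, ∃ B ∈ S, ∃ C : Multiset (Finset σ), IsCombination δ C A B ∧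
      SatUQ E C ∧ ¬ ∃ T ∈ S, DominatedBy C T :=
  missing_from_two_computed_general δ E Γ S hΓsing hSuq hΓS hex

end RoundElim
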